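/- For the Mills ratio R(t) = exp(t²/2)·∫_t^∞ exp(−x²/2) dx of the standard normal distribution, the derivative of 1/R(t) is strictly less than 1 for all real t. -/

import Mathlib

open MeasureTheory

noncomputable def millsRatio (t : ℝ) : ℝ :=
  Real.exp (t ^ 2 / 2) * ∫ u in Set.Ioi t, Real.exp (-u ^ 2 / 2)

/-!
Write `φ x = exp (-x²/2)` and `Φ t = ∫_t^∞ φ`, so that `1 / millsRatio = φ / Φ`, `φ' = -x φ` and
`Φ' = -φ`; the claim `(φ / Φ)' < 1` becomes `φ² < Φ² + t φ Φ`. The three functions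
`U = φ - t Φ`, `W = (1 + t²) Φ - t φ` and `V = Φ² + t φ Φ - φ²` all tend to `0` at `+∞`, and
`U' = -Φ`, `W' = -2 U`, `V' = -φ W`. A function with negative derivative that tends to `0` at
`+∞` is positive, so `Φ > 0` gives `U > 0`, which gives `W > 0`, which gives `V > 0`.
-/

open Set Filter Topology Real

theorem hasDerivAt_integral_Ioi {E : Type*} [NormedAddCommGroup E] [NormedSpace ℝ E]
    [CompleteSpace E] {f : ℝ → E} (hf : Continuous f) (hfi : Integrable f) (t : ℝ) :
    HasDerivAt (fun s => ∫ x in Ioi s, f x) (-f t) t := by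
  have tail_eq : (fun s => ∫ x in Ioi s, f x) =
      fun s => (∫ x in Ioi 0, f x) - ∫ x in (0 : ℝ)..s, f x := by
    funext s
    rw [← intervalIntegral.integral_Ioi_sub_Ioi' hfi.integrableOn hfi.integrableOn,
      sub_sub_cancel]
  rw [tail_eq, ← zero_sub]
  exact (hasDerivAt_const t _).sub (hf.integral_hasStrictDerivAt 0 t).hasDerivAt

theorem pos_of_hasDerivAt_neg_of_tendsto_zero {F F' : ℝ → ℝ} (hF : ∀ x, HasDerivAt F (F' x) x)
    (hF' : ∀ x, F' x < 0) (hlim : Tendsto F atTop (𝓝 0)) (t : ℝ) : 0 < F t :=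
  have hanti := strictAnti_of_hasDerivAt_neg hF hF'
  (hanti.antitone.le_of_tendsto hlim (t + 1)).trans_lt (hanti (lt_add_one t))

theorem tendsto_pow_mul_of_le_exp_neg {g : ℝ → ℝ}
    (hg : ∀ᶠ t in atTop, 0 ≤ g t ∧ g t ≤ exp (-t)) (n : ℕ) :
    Tendsto (fun t => t ^ n * g t) atTop (𝓝 0) := by
  refine tendsto_of_tendsto_of_tendsto_of_le_of_le' tendsto_const_nhds
    (tendsto_pow_mul_exp_neg_atTop_nhds_zero n) ?_ ?_ <;>
    filter_upwards [hg, eventually_ge_atTop 0] with t ⟨hg₀, hg_le⟩ ht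
  · positivity
  · exact mul_le_mul_of_nonneg_left hg_le (by positivity)

noncomputable def gaussianBell (x : ℝ) : ℝ := exp (-x ^ 2 / 2)

noncomputable def gaussianTail (t : ℝ) : ℝ := ∫ u in Ioi t, gaussianBell u

theorem gaussianBell_pos (x : ℝ) : 0 < gaussianBell x := exp_pos _

theorem continuous_gaussianBell : Continuous gaussianBell := by
  unfold gaussianBell; fun_prop

theorem integrable_gaussianBell : Integrable gaussianBell := by
  convert integrable_exp_neg_mul_sq (b := 1 / 2) one_half_pos using 2 with x
  rw [gaussianBell]
  ring_nf

theorem hasDerivAt_gaussianBell (x : ℝ) : HasDerivAt gaussianBell (-x * gaussianBell x) x := by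
  have h : HasDerivAt (fun y => -y ^ 2 / 2) (-x) x := by
    simpa [neg_div] using ((hasDerivAt_pow 2 x).neg).div_const 2
  exact h.exp.congr_deriv (by rw [gaussianBell]; ring)

theorem gaussianBell_le_exp_neg {x : ℝ} (hx : 2 ≤ x) : gaussianBell x ≤ exp (-x) :=
  exp_le_exp.2 (by nlinarith)

theorem gaussianTail_pos (t : ℝ) : 0 < gaussianTail t := by
  have : NeZero (volume.restrict (Ioi t)) := ⟨by simp⟩
  exact integral_exp_pos integrable_gaussianBell.integrableOn

theorem hasDerivAt_gaussianTail (t : ℝ) : HasDerivAt gaussianTail (-gaussianBell t) t :=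
  hasDerivAt_integral_Ioi continuous_gaussianBell integrable_gaussianBell t

theorem gaussianTail_le_exp_neg {t : ℝ} (ht : 2 ≤ t) : gaussianTail t ≤ exp (-t) := by
  rw [gaussianTail, ← integral_exp_neg_Ioi t]
  refine setIntegral_mono_on integrable_gaussianBell.integrableOn
    (by simpa using exp_neg_integrableOn_Ioi t one_pos) measurableSet_Ioi
    fun x hx => gaussianBell_le_exp_neg (ht.trans (le_of_lt hx))

theorem tendsto_pow_mul_gaussianBell (n : ℕ) :
    Tendsto (fun t => t ^ n * gaussianBell t) atTop (𝓝 0) :=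
  tendsto_pow_mul_of_le_exp_neg ((eventually_ge_atTop 2).mono fun _ ht =>
    ⟨(gaussianBell_pos _).le, gaussianBell_le_exp_neg ht⟩) n

theorem tendsto_pow_mul_gaussianTail (n : ℕ) :
    Tendsto (fun t => t ^ n * gaussianTail t) atTop (𝓝 0) :=
  tendsto_pow_mul_of_le_exp_neg ((eventually_ge_atTop 2).mono fun _ ht =>
    ⟨(gaussianTail_pos _).le, gaussianTail_le_exp_neg ht⟩) n

theorem mul_gaussianTail_lt_gaussianBell (t : ℝ) : t * gaussianTail t < gaussianBell t := by
  have hderiv (x : ℝ) :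
      HasDerivAt (fun s => gaussianBell s - s * gaussianTail s) (-gaussianTail x) x :=
    ((hasDerivAt_gaussianBell x).sub
      ((hasDerivAt_id' x).mul (hasDerivAt_gaussianTail x))).congr_deriv (by ring)
  have hlim : Tendsto (fun s => gaussianBell s - s * gaussianTail s) atTop (𝓝 0) := by
    simpa using (tendsto_pow_mul_gaussianBell 0).sub (tendsto_pow_mul_gaussianTail 1)
  have hpos := pos_of_hasDerivAt_neg_of_tendsto_zero hderiv
    (fun x => neg_neg_of_pos (gaussianTail_pos x)) hlim t
  linarith

theorem mul_gaussianBell_lt_one_add_sq_mul_gaussianTail (t : ℝ) :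
    t * gaussianBell t < (1 + t ^ 2) * gaussianTail t := by
  have hderiv (x : ℝ) : HasDerivAt (fun s => (1 + s ^ 2) * gaussianTail s - s * gaussianBell s)
      (-(2 * (gaussianBell x - x * gaussianTail x))) x := by
    have hsq : HasDerivAt (fun s : ℝ => 1 + s ^ 2) (2 * x) x := by
      simpa using (hasDerivAt_pow 2 x).const_add 1
    exact ((hsq.mul (hasDerivAt_gaussianTail x)).sub
      ((hasDerivAt_id' x).mul (hasDerivAt_gaussianBell x))).congr_deriv (by ring)
  have hlim : Tendsto (fun s => (1 + s ^ 2) * gaussianTail s - s * gaussianBell s)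
      atTop (𝓝 0) := by
    have := ((tendsto_pow_mul_gaussianTail 0).add (tendsto_pow_mul_gaussianTail 2)).sub
      (tendsto_pow_mul_gaussianBell 1)
    simpa [add_mul] using this
  have hpos := pos_of_hasDerivAt_neg_of_tendsto_zero hderiv
    (fun x => neg_neg_of_pos (mul_pos two_pos (sub_pos.2 (mul_gaussianTail_lt_gaussianBell x))))
    hlim t
  linarith

theorem gaussianBell_sq_lt (t : ℝ) :
    gaussianBell t ^ 2 < gaussianTail t ^ 2 + t * gaussianBell t * gaussianTail t := by
  have hderiv (x : ℝ) : HasDerivAt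
      (fun s => gaussianTail s ^ 2 + s * gaussianBell s * gaussianTail s - gaussianBell s ^ 2)
      (-(gaussianBell x * ((1 + x ^ 2) * gaussianTail x - x * gaussianBell x))) x := by
    have hφ := hasDerivAt_gaussianBell x
    have hΦ := hasDerivAt_gaussianTail x
    exact (((hΦ.pow 2).add (((hasDerivAt_id' x).mul hφ).mul hΦ)).sub (hφ.pow 2)).congr_deriv
      (by simp only [Pi.mul_apply]; ring)
  have hlim : Tendsto
      (fun s => gaussianTail s ^ 2 + s * gaussianBell s * gaussianTail s - gaussianBell s ^ 2)
      atTop (𝓝 0) := by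
    have hφ := tendsto_pow_mul_gaussianBell 0
    have hΦ := tendsto_pow_mul_gaussianTail 0
    have := ((hΦ.mul hΦ).add ((tendsto_pow_mul_gaussianBell 1).mul hΦ)).sub (hφ.mul hφ)
    simpa [sq] using this
  have hpos := pos_of_hasDerivAt_neg_of_tendsto_zero hderiv
    (fun x => neg_neg_of_pos (mul_pos (gaussianBell_pos x)
      (sub_pos.2 (mul_gaussianBell_lt_one_add_sq_mul_gaussianTail x)))) hlim t
  linarith

theorem one_div_millsRatio (t : ℝ) : 1 / millsRatio t = gaussianBell t / gaussianTail t := by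
  change 1 / (exp (t ^ 2 / 2) * gaussianTail t) = exp (-t ^ 2 / 2) / gaussianTail t
  rw [neg_div, exp_neg, one_div, mul_inv, ← div_eq_mul_inv]

theorem stmt_19 (t : ℝ) :
    deriv (fun s : ℝ => 1 / millsRatio s) t < 1 := by
  have hquot := (hasDerivAt_gaussianBell t).div (hasDerivAt_gaussianTail t)
    (gaussianTail_pos t).ne'
  have hfun : (fun s => 1 / millsRatio s) = gaussianBell / gaussianTail :=
    funext one_div_millsRatio
  rw [hfun, hquot.deriv, div_lt_one (pow_pos (gaussianTail_pos t) 2)]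
  linarith [gaussianBell_sq_lt t]
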